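/- arXiv:2512.16548 — 3 statements merged into one kernel-verified Lean document; each statement's English description precedes it below -/
import Mathlib

section
/- Let Δ = (C,δ) be a building of type (W,S), let Σ be an apartment of Δ, let φ be a special automorphism of Δ, and let X ⊆ Σ be a nonempty set of chambers fixed pointwise by φ. If σ ⊆ Σ satisfies φ(σ) = σ, then φ fixes σ pointwise. -/
/-- A building of type (W,S): a chamber set `C` with a Weyl distance function
satisfying the axioms (Bu1)-(Bu3). -/
structure Building {B : Type*} {W : Type*} [Group W] {M : CoxeterMatrix B}
    (cs : CoxeterSystem M W) (C : Type*) where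
  dist : C → C → W
  bu1 : ∀ x y : C, dist x y = 1 ↔ x = y
  bu2 : ∀ x y z : C, ∀ s : B, dist y z = cs.simple s →
    (dist x z = dist x y ∨ dist x z = dist x y * cs.simple s) ∧
    (cs.length (dist x y * cs.simple s) = cs.length (dist x y) + 1 →
      dist x z = dist x y * cs.simple s)
  bu3 : ∀ x y : C, ∀ s : B, ∃ z : C,
    dist y z = cs.simple s ∧ dist x z = dist x y * cs.simple s

namespace Building

variable {B : Type*} {W : Type*} [Group W] {M : CoxeterMatrix B}
  {cs : CoxeterSystem M W} {C : Type*}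

/-- A special automorphism of a building: a bijection of the chambers preserving
`s`-adjacency for every `s ∈ S`. -/
def IsSpecialAut (bld : Building cs C) (φ : C ≃ C) : Prop :=
  ∀ (x y : C) (s : B), bld.dist x y = cs.simple s ↔ bld.dist (φ x) (φ y) = cs.simple s

/-- `d 0, d 1, ..., d k` is a gallery: consecutive chambers are adjacent. -/
def IsGallery (bld : Building cs C) (d : ℕ → C) (k : ℕ) : Prop :=
  ∀ i < k, ∃ s : B, bld.dist (d i) (d (i + 1)) = cs.simple s

/-- A gallery is minimal if there is no shorter gallery with the same endpoints. -/
def IsMinimalGallery (bld : Building cs C) (d : ℕ → C) (k : ℕ) : Prop :=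
  bld.IsGallery d k ∧
    ∀ (e : ℕ → C) (m : ℕ), bld.IsGallery e m → e 0 = d 0 → e m = d k → k ≤ m

/-- A set of chambers is convex if it contains every minimal gallery between
two of its chambers. -/
def IsConvex (bld : Building cs C) (A : Set C) : Prop :=
  ∀ (d : ℕ → C) (k : ℕ), bld.IsMinimalGallery d k → d 0 ∈ A → d k ∈ A →
    ∀ i ≤ k, d i ∈ A

/-- The convex hull of a set of chambers. -/
def conv (bld : Building cs C) (X : Set C) : Set C :=
  ⋂₀ {A : Set C | bld.IsConvex A ∧ X ⊆ A}

/-- A residue: the set of chambers at distance in a standard parabolic ⟨J⟩ from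
a fixed chamber. -/
def IsResidue (bld : Building cs C) (R : Set C) : Prop :=
  ∃ (J : Set B) (x : C), R = {y : C | bld.dist x y ∈ Subgroup.closure (cs.simple '' J)}

/-- A panel: a residue of rank one. -/
def IsPanel (bld : Building cs C) (P : Set C) : Prop :=
  ∃ (s : B) (x : C), P = {y : C | bld.dist x y ∈ Subgroup.closure {cs.simple s}}

/-- An apartment: a nonempty, convex and thin subset of chambers. -/
def IsApartment (bld : Building cs C) (A : Set C) : Prop :=
  A.Nonempty ∧ bld.IsConvex A ∧
    ∀ P : Set C, bld.IsPanel P → (P ∩ A).Nonempty →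
      ∃ a b : C, a ≠ b ∧ P ∩ A = {a, b}

end Building

section Aux

variable {B : Type*} {W : Type*} [Group W] {M : CoxeterMatrix B}
  {cs : CoxeterSystem M W} {C : Type*}

lemma Building.dist_self (bld : Building cs C) (x : C) : bld.dist x x = 1 :=
  (bld.bu1 x x).2 rfl

lemma Building.simple_ne_one (s : B) : cs.simple s ≠ (1 : W) := by
  intro h
  have := cs.length_simple s
  rw [h, cs.length_one] at this
  exact one_ne_zero this.symm

/-- Symmetry of the Weyl distance for simple reflections. -/
lemma Building.dist_symm_simple (bld : Building cs C) {x y : C} {s : B}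
    (h : bld.dist x y = cs.simple s) : bld.dist y x = cs.simple s := by
  have h2 := ((bld.bu2 y x y s) h).1
  rw [bld.dist_self y] at h2
  rcases h2 with h2 | h2
  · exfalso
    have hxy : y = x := (bld.bu1 y x).1 h2.symm
    rw [hxy.symm, bld.dist_self] at h
    exact Building.simple_ne_one s h.symm
  · have : bld.dist y x = (cs.simple s)⁻¹ := by
      rw [eq_comm, mul_eq_one_iff_eq_inv] at h2
      exact h2
    rw [this, cs.inv_simple]

/-- Any gallery from `x` to `y` has length at least `ℓ(δ(x,y))`. -/
lemma Building.length_dist_le_of_gallery (bld : Building cs C) (d : ℕ → C) :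
    ∀ k, bld.IsGallery d k → cs.length (bld.dist (d 0) (d k)) ≤ k := by
  intro k
  induction k with
  | zero => intro _; rw [bld.dist_self, cs.length_one]
  | succ n ih =>
    intro hg
    have hg' : bld.IsGallery d n := fun i hi => hg i (Nat.lt_succ_of_lt hi)
    have hn := ih hg'
    obtain ⟨s, hs⟩ := hg n (Nat.lt_succ_self n)
    have h2 := (bld.bu2 (d 0) (d n) (d (n + 1)) s hs).1
    rcases h2 with h2 | h2
    · rw [h2]; omega
    · rw [h2]
      rcases cs.length_mul_simple (bld.dist (d 0) (d n)) s with h3 | h3 <;> omega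

/-- There is a gallery of length `ℓ(δ(x,y))` from `x` to `y`. -/
lemma Building.exists_gallery (bld : Building cs C) :
    ∀ (n : ℕ) (x y : C), cs.length (bld.dist x y) = n →
      ∃ d : ℕ → C, bld.IsGallery d n ∧ d 0 = x ∧ d n = y := by
  intro n
  induction n with
  | zero =>
    intro x y h
    have : bld.dist x y = 1 := cs.length_eq_zero_iff.mp h
    have hxy : x = y := (bld.bu1 x y).1 this
    exact ⟨fun _ => x, fun i hi => absurd hi (Nat.not_lt_zero i), rfl, hxy⟩
  | succ n ih =>
    intro x y h
    have hne : bld.dist x y ≠ 1 := by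
      intro h1; rw [h1, cs.length_one] at h; omega
    obtain ⟨s, hs⟩ := cs.exists_rightDescent_of_ne_one hne
    obtain ⟨z, hz1, hz2⟩ := bld.bu3 x y s
    have hlen : cs.length (bld.dist x z) = n := by
      rw [hz2]
      have := cs.isRightDescent_iff.mp hs
      omega
    obtain ⟨e, he, he0, hen⟩ := ih x z hlen
    refine ⟨fun i => if i ≤ n then e i else y, ?_, ?_, ?_⟩
    · intro i hi
      rcases Nat.lt_or_ge i n with hi' | hi'
      · obtain ⟨t, ht⟩ := he i hi'
        refine ⟨t, ?_⟩
        show bld.dist (if i ≤ n then e i else y) (if i + 1 ≤ n then e (i + 1) else y)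
          = cs.simple t
        rw [if_pos (Nat.le_of_lt hi'), if_pos (Nat.succ_le_of_lt hi')]
        exact ht
      · have : i = n := by omega
        subst this
        refine ⟨s, ?_⟩
        show bld.dist (if i ≤ i then e i else y) (if i + 1 ≤ i then e (i + 1) else y)
          = cs.simple s
        rw [if_pos le_rfl, if_neg (by omega), hen]
        exact bld.dist_symm_simple hz1
    · show (if 0 ≤ n then e 0 else y) = x
      rw [if_pos (Nat.zero_le n), he0]
    · show (if n + 1 ≤ n then e (n + 1) else y) = y
      rw [if_neg (by omega)]

/-- A special automorphism preserves the full Weyl distance. -/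
lemma Building.dist_map (bld : Building cs C) (φ : C ≃ C) (hφ : bld.IsSpecialAut φ) :
    ∀ (n : ℕ) (x y : C), cs.length (bld.dist x y) = n →
      bld.dist (φ x) (φ y) = bld.dist x y := by
  intro n
  induction n with
  | zero =>
    intro x y h
    have h1 : bld.dist x y = 1 := cs.length_eq_zero_iff.mp h
    have hxy : x = y := (bld.bu1 x y).1 h1
    subst hxy
    rw [bld.dist_self, bld.dist_self]
  | succ n ih =>
    intro x y h
    have hne : bld.dist x y ≠ 1 := by
      intro h1; rw [h1, cs.length_one] at h; omega
    obtain ⟨s, hs⟩ := cs.exists_rightDescent_of_ne_one hne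
    obtain ⟨z, hz1, hz2⟩ := bld.bu3 x y s
    have hlen : cs.length (bld.dist x z) = n := by
      rw [hz2]; have := cs.isRightDescent_iff.mp hs; omega
    have hxz : bld.dist (φ x) (φ z) = bld.dist x z := ih x z hlen
    have hzy : bld.dist (φ z) (φ y) = cs.simple s :=
      bld.dist_symm_simple ((hφ y z s).mp hz1)
    have hgrow : cs.length (bld.dist (φ x) (φ z) * cs.simple s)
        = cs.length (bld.dist (φ x) (φ z)) + 1 := by
      rw [hxz, hz2, mul_assoc, cs.simple_mul_simple_self, mul_one]
      have := cs.isRightDescent_iff.mp hs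
      omega
    have := (bld.bu2 (φ x) (φ z) (φ y) s hzy).2 hgrow
    rw [this, hxz, hz2, mul_assoc, cs.simple_mul_simple_self, mul_one]

/-- Within an apartment, the Weyl distance from a fixed chamber determines the chamber. -/
lemma Building.apartment_dist_injOn (bld : Building cs C) (A : Set C)
    (hA : bld.IsApartment A) {x : C} (hx : x ∈ A) :
    ∀ (n : ℕ) (y y' : C), y ∈ A → y' ∈ A → cs.length (bld.dist x y) = n →
      bld.dist x y = bld.dist x y' → y = y' := by
  intro n
  induction n with
  | zero =>
    intro y y' _ _ h heq
    have h1 : bld.dist x y = 1 := cs.length_eq_zero_iff.mp h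
    have h2 : bld.dist x y' = 1 := by rw [← heq, h1]
    rw [← (bld.bu1 x y).1 h1, ← (bld.bu1 x y').1 h2]
  | succ n ih =>
    intro y y' hy hy' h heq
    have hne : bld.dist x y ≠ 1 := by
      intro h1; rw [h1, cs.length_one] at h; omega
    obtain ⟨s, hs⟩ := cs.exists_rightDescent_of_ne_one hne
    -- produce z ∈ A adjacent to y, with dist x z = (dist x y) * s
    have key : ∀ u : C, u ∈ A → bld.dist x u = bld.dist x y →
        ∃ z : C, z ∈ A ∧ bld.dist z u = cs.simple s ∧
          bld.dist x z = bld.dist x y * cs.simple s := by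
      intro u hu hdu
      obtain ⟨z, hz1, hz2⟩ := bld.bu3 x u s
      rw [hdu] at hz2
      have hlenz : cs.length (bld.dist x z) = n := by
        rw [hz2]; have := cs.isRightDescent_iff.mp hs; omega
      obtain ⟨e, he, he0, hen⟩ := bld.exists_gallery n x z hlenz
      -- extend the gallery by u
      set d : ℕ → C := fun i => if i ≤ n then e i else u with hd
      have hgal : bld.IsGallery d (n + 1) := by
        intro i hi
        rcases Nat.lt_or_ge i n with hi' | hi'
        · obtain ⟨t, ht⟩ := he i hi'
          refine ⟨t, ?_⟩
          show bld.dist (if i ≤ n then e i else u) (if i + 1 ≤ n then e (i + 1) else u)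
            = cs.simple t
          rw [if_pos (Nat.le_of_lt hi'), if_pos (Nat.succ_le_of_lt hi')]
          exact ht
        · have : i = n := by omega
          subst this
          refine ⟨s, ?_⟩
          show bld.dist (if i ≤ i then e i else u) (if i + 1 ≤ i then e (i + 1) else u)
            = cs.simple s
          rw [if_pos le_rfl, if_neg (by omega), hen]
          exact bld.dist_symm_simple hz1
      have hd0 : d 0 = x := by
        show (if 0 ≤ n then e 0 else u) = x
        rw [if_pos (Nat.zero_le n), he0]
      have hdn1 : d (n + 1) = u := by
        show (if n + 1 ≤ n then e (n + 1) else u) = u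
        rw [if_neg (by omega)]
      have hmin : bld.IsMinimalGallery d (n + 1) := by
        refine ⟨hgal, ?_⟩
        intro f m hf hf0 hfm
        have := bld.length_dist_le_of_gallery f m hf
        rw [hf0, hfm, hd0, hdn1, hdu, h] at this
        exact this
      have hzA : z ∈ A := by
        have hmem := hA.2.1 d (n + 1) hmin (by rw [hd0]; exact hx)
          (by rw [hdn1]; exact hu) n (Nat.le_succ n)
        have hdn : d n = z := by
          show (if n ≤ n then e n else u) = z
          rw [if_pos le_rfl, hen]
        rwa [hdn] at hmem
      exact ⟨z, hzA, bld.dist_symm_simple hz1, hz2⟩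
    obtain ⟨z, hzA, hzy, hzx⟩ := key y hy rfl
    obtain ⟨z', hzA', hzy', hzx'⟩ := key y' hy' heq.symm
    have hlenz : cs.length (bld.dist x z) = n := by
      rw [hzx]; have := cs.isRightDescent_iff.mp hs; omega
    have hzz : z = z' := ih z z' hzA hzA' hlenz (by rw [hzx, hzx'])
    subst hzz
    -- y and y' lie in the panel of z in direction s, together with z
    set P : Set C := {c : C | bld.dist z c ∈ Subgroup.closure {cs.simple s}} with hP
    have hPpanel : bld.IsPanel P := ⟨s, z, rfl⟩
    have hyP : y ∈ P := by
      show bld.dist z y ∈ Subgroup.closure {cs.simple s}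
      rw [hzy]
      exact Subgroup.subset_closure rfl
    have hyP' : y' ∈ P := by
      show bld.dist z y' ∈ Subgroup.closure {cs.simple s}
      rw [hzy']
      exact Subgroup.subset_closure rfl
    have hzP : z ∈ P := by
      show bld.dist z z ∈ Subgroup.closure {cs.simple s}
      rw [bld.dist_self]
      exact Subgroup.one_mem _
    obtain ⟨a, b, hab, hPab⟩ := hA.2.2 P hPpanel ⟨z, hzP, hzA⟩
    have hyz : y ≠ z := by
      intro h1
      rw [h1, bld.dist_self] at hzy
      exact Building.simple_ne_one s hzy.symm
    have hyz' : y' ≠ z := by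
      intro h1
      rw [h1, bld.dist_self] at hzy'
      exact Building.simple_ne_one s hzy'.symm
    have hmy : y ∈ ({a, b} : Set C) := hPab ▸ (⟨hyP, hy⟩ : y ∈ P ∩ A)
    have hmy' : y' ∈ ({a, b} : Set C) := hPab ▸ (⟨hyP', hy'⟩ : y' ∈ P ∩ A)
    have hmz : z ∈ ({a, b} : Set C) := hPab ▸ (⟨hzP, hzA⟩ : z ∈ P ∩ A)
    simp only [Set.mem_insert_iff, Set.mem_singleton_iff] at hmy hmy' hmz
    rcases hmz with rfl | rfl
    · rcases hmy with rfl | rfl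
      · exact absurd rfl hyz
      · rcases hmy' with rfl | rfl
        · exact absurd rfl hyz'
        · rfl
    · rcases hmy with rfl | rfl
      · rcases hmy' with rfl | rfl
        · rfl
        · exact absurd rfl hyz'
      · exact absurd rfl hyz

end Aux


open Building in
/-- Let Σ be an apartment, φ a special automorphism, X ⊆ Σ a
nonempty set fixed pointwise by φ, and σ ⊆ Σ with φ(σ) = σ. Then φ fixes σ
pointwise. -/
theorem specialAut_fixes_stable_subset_of_apartment
    {B : Type*} {W : Type*} [Group W] {M : CoxeterMatrix B}
    {cs : CoxeterSystem M W} {C : Type*}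
    (bld : Building cs C) (A : Set C) (hA : bld.IsApartment A)
    (φ : C ≃ C) (hφ : bld.IsSpecialAut φ)
    (X : Set C) (hXA : X ⊆ A) (hXne : X.Nonempty) (hfix : ∀ x ∈ X, φ x = x)
    (σ : Set C) (hσA : σ ⊆ A) (hσ : φ '' σ = σ) :
    ∀ y ∈ σ, φ y = y := by
  intro y hy
  obtain ⟨x, hxX⟩ := hXne
  have hxA : x ∈ A := hXA hxX
  have hφx : φ x = x := hfix x hxX
  have hyA : y ∈ A := hσA hy
  have hφyσ : φ y ∈ σ := by
    rw [← hσ]; exact Set.mem_image_of_mem φ hy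
  have hφyA : φ y ∈ A := hσA hφyσ
  have hdist : bld.dist x (φ y) = bld.dist x y := by
    have := bld.dist_map φ hφ (cs.length (bld.dist x y)) x y rfl
    rwa [hφx] at this
  exact bld.apartment_dist_injOn A hA hxA (cs.length (bld.dist x (φ y)))
    (φ y) y hφyA hyA rfl hdist
end

section
/- Let H be a group and let E be a family of subgroups {α(E) : α ∈ H} of a group G indexed by a group action, totally ordered by inclusion pairwise (for all α, β ∈ H, α(E) ≤ β(E) or β(E) ≤ α(E)), with all indices [α(E) : β(E)] finite when β(E) ≤ α(E). Suppose there exists β* ∈ H with β*(E) > E minimizing [β*(E) : E] among all β with β(E) > E, and suppose for every α with α(E) > E there is some n with β*^n(E) ≤ α(E) (which holds when each index [β(E):E] is finite). Then for every α ∈ H there exists z ∈ ℤ with α(E) = β*^z(E); in particular {α(E) : α ∈ H} = {β*^z(E) : z ∈ ℤ}. -/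
/-!
Translating by `β⁻¹` turns `β(E) ≤ α(E)` into `E ≤ β⁻¹α(E)` and divides the index over `E` by
`[β(E) : E] ≥ 2`, while `α(E) ≤ β(E)` together with the minimality of `[β(E) : E]` forces
`α(E) = β(E)`. By induction on `[α(E) : E]` every translate containing `E` is some `βⁿ(E)`.
If instead `α(E) ≤ E`, then `E ≤ α⁻¹(E) = βⁿ(E)`, and since `[α, βⁿ]` fixes `E` this gives
`α(E) = β⁻ⁿ(E)`.
-/

/-- The translate α(E) of a subgroup E of G under the action of α ∈ H by
automorphisms. -/
def Subgroup.translate {H G : Type*} [Group H] [Group G]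
    (φ : H →* MulAut G) (E : Subgroup G) (α : H) : Subgroup G :=
  E.map (φ α).toMonoidHom

open scoped commutatorElement

namespace Subgroup

section RelIndex

variable {G : Type*} [Group G] {A B C : Subgroup G}

theorem relIndex_lt_of_lt_left (hAB : A < B) (hBC : B ≤ C) (hAC : A.relIndex C ≠ 0) :
    B.relIndex C < A.relIndex C := by
  have hmul := relIndex_mul_relIndex A B C hAB.le hBC
  have hAB1 : A.relIndex B ≠ 1 := fun h => hAB.not_ge (relIndex_eq_one.mp h)
  have hBC0 : B.relIndex C ≠ 0 := fun h => hAC (by rw [← hmul, h, mul_zero])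
  have hAB0 : A.relIndex B ≠ 0 := fun h => hAC (by rw [← hmul, h, zero_mul])
  rw [← hmul]
  exact lt_mul_left (Nat.pos_of_ne_zero hBC0) (by omega)

theorem relIndex_lt_of_lt_right (hAB : A ≤ B) (hBC : B < C) (hAC : A.relIndex C ≠ 0) :
    A.relIndex B < A.relIndex C := by
  have hmul := relIndex_mul_relIndex A B C hAB hBC.le
  have hBC1 : B.relIndex C ≠ 1 := fun h => hBC.not_ge (relIndex_eq_one.mp h)
  have hAB0 : A.relIndex B ≠ 0 := fun h => hAC (by rw [← hmul, h, zero_mul])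
  have hBC0 : B.relIndex C ≠ 0 := fun h => hAC (by rw [← hmul, h, mul_zero])
  rw [← hmul]
  exact lt_mul_right (Nat.pos_of_ne_zero hAB0) (by omega)

end RelIndex

section Translate

variable {H G : Type*} [Group H] [Group G] (φ : H →* MulAut G) (E : Subgroup G)

@[simp]
theorem translate_one : translate φ E 1 = E := by
  ext x
  simp [translate]

theorem translate_mul (a b : H) :
    translate φ E (a * b) = (translate φ E b).map (φ a).toMonoidHom := by
  simp only [translate, map_map, map_mul]
  rfl

theorem translate_mul_le_translate_mul_iff (a b c : H) :
    translate φ E (a * b) ≤ translate φ E (a * c) ↔ translate φ E b ≤ translate φ E c := by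
  rw [translate_mul, translate_mul]
  exact map_le_map_iff_of_injective (φ a).injective

theorem translate_mul_inj (a b c : H) :
    translate φ E (a * b) = translate φ E (a * c) ↔ translate φ E b = translate φ E c := by
  rw [translate_mul, translate_mul]
  exact (map_injective (φ a).injective).eq_iff

theorem relIndex_translate_mul (a b c : H) :
    (translate φ E (a * b)).relIndex (translate φ E (a * c)) =
      (translate φ E b).relIndex (translate φ E c) := by
  rw [translate_mul, translate_mul]
  exact relIndex_map_map_of_injective _ _ (φ a).injective

theorem le_translate_inv_mul_iff (a b : H) :
    E ≤ translate φ E (a⁻¹ * b) ↔ translate φ E a ≤ translate φ E b := by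
  rw [← translate_mul_le_translate_mul_iff φ E a⁻¹ a b, inv_mul_cancel, translate_one]

theorem relIndex_translate_inv_mul (a b : H) :
    E.relIndex (translate φ E (a⁻¹ * b)) = (translate φ E a).relIndex (translate φ E b) := by
  rw [← relIndex_translate_mul φ E a⁻¹ a b, inv_mul_cancel, translate_one]

def translateStabilizer : Subgroup H where
  carrier := {g | translate φ E g = E}
  one_mem' := translate_one φ E
  mul_mem' {a b} (ha : translate φ E a = E) (hb : translate φ E b = E) := by
    change translate φ E (a * b) = E
    rw [translate_mul, hb]
    exact ha
  inv_mem' {a} (ha : translate φ E a = E) := by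
    have h := translate_mul φ E a⁻¹ a
    rw [inv_mul_cancel, translate_one, ha] at h
    exact h.symm

theorem mem_translateStabilizer {g : H} :
    g ∈ translateStabilizer φ E ↔ translate φ E g = E :=
  Iff.rfl

theorem translate_eq_translate_iff (a b : H) :
    translate φ E a = translate φ E b ↔ b⁻¹ * a ∈ translateStabilizer φ E := by
  rw [mem_translateStabilizer, ← translate_mul_inj φ E b⁻¹, inv_mul_cancel, translate_one]

variable {φ E} {β : H}

theorem translate_eq_zpow_neg_of_translate_inv_eq {α : H} {n : ℤ}
    (hcomm : translate φ E ⁅α, β ^ n⁆ = E)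
    (h : translate φ E α⁻¹ = translate φ E (β ^ n)) :
    translate φ E α = translate φ E (β ^ (-n)) := by
  rw [translate_eq_translate_iff] at h ⊢
  rw [← mem_translateStabilizer] at hcomm
  have hgroup : (β ^ (-n))⁻¹ * α = ⁅α, β ^ n⁆⁻¹ * ((β ^ n)⁻¹ * α⁻¹)⁻¹ := by
    rw [commutatorElement_def]
    group
  rw [hgroup]
  exact mul_mem (inv_mem hcomm) (inv_mem h)

theorem exists_translate_eq_pow_of_le
    (hcomp : ∀ α : H, translate φ E α ≤ translate φ E β ∨ translate φ E β ≤ translate φ E α)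
    (hfin : ∀ α : H, E ≤ translate φ E α → E.relIndex (translate φ E α) ≠ 0)
    (hβ : E < translate φ E β)
    (hmin : ∀ α : H, E < translate φ E α →
      E.relIndex (translate φ E β) ≤ E.relIndex (translate φ E α))
    (α : H) (hα : E ≤ translate φ E α) : ∃ n : ℕ, translate φ E α = translate φ E (β ^ n) := by
  induction hk : E.relIndex (translate φ E α) using Nat.strong_induction_on generalizing α with
  | _ k ih =>
  rcases hα.eq_or_lt with hEα | hEα
  · exact ⟨0, by rw [pow_zero, translate_one, ← hEα]⟩
  rcases hcomp α with hαβ | hβα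
  · refine ⟨1, (pow_one β).symm ▸ hαβ.eq_of_not_lt fun hlt => ?_⟩
    exact (relIndex_lt_of_lt_right hEα.le hlt (hfin β hβ.le)).not_ge (hmin α hEα)
  · have hshift : E ≤ translate φ E (β⁻¹ * α) := (le_translate_inv_mul_iff φ E β α).mpr hβα
    have hlt : E.relIndex (translate φ E (β⁻¹ * α)) < k := by
      rw [relIndex_translate_inv_mul, ← hk]
      exact relIndex_lt_of_lt_left hβ hβα (hfin α hα)
    obtain ⟨n, hn⟩ := ih _ hlt (β⁻¹ * α) hshift rfl
    refine ⟨n + 1, ?_⟩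
    rw [← mul_inv_cancel_left β α, translate_mul, hn, ← translate_mul, pow_succ']

end Translate

end Subgroup

theorem translates_of_eigenfactor_are_powers_general
    {H G : Type*} [Group H] [Group G]
    (φ : H →* MulAut G) (E : Subgroup G) (β' : H)
    (hcomp : ∀ α β : H, Subgroup.translate φ E α ≤ Subgroup.translate φ E β ∨
      Subgroup.translate φ E β ≤ Subgroup.translate φ E α)
    (hfin : ∀ α β : H, Subgroup.translate φ E β ≤ Subgroup.translate φ E α →
      (Subgroup.translate φ E β).relIndex (Subgroup.translate φ E α) ≠ 0)
    (hcommfix : ∀ (α : H) (n : ℤ), Subgroup.translate φ E ⁅α, β' ^ n⁆ = E)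
    (hβ' : E < Subgroup.translate φ E β')
    (hmin : ∀ β : H, E < Subgroup.translate φ E β →
      E.relIndex (Subgroup.translate φ E β') ≤ E.relIndex (Subgroup.translate φ E β)) :
    (∀ α : H, ∃ z : ℤ, Subgroup.translate φ E α = Subgroup.translate φ E (β' ^ z)) ∧
      Set.range (Subgroup.translate φ E) =
        Set.range (fun z : ℤ => Subgroup.translate φ E (β' ^ z)) := by
  have hpow := Subgroup.exists_translate_eq_pow_of_le (fun α => hcomp α β')
    (fun α hα => by simpa using hfin α 1 (by simpa using hα)) hβ' hmin
  have hzpow : ∀ α : H, ∃ z : ℤ, Subgroup.translate φ E α = Subgroup.translate φ E (β' ^ z) := by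
    intro α
    rcases hcomp 1 α with hEα | hαE
    · obtain ⟨n, hn⟩ := hpow α (by simpa using hEα)
      exact ⟨n, by rw [hn, zpow_natCast]⟩
    · obtain ⟨n, hn⟩ := hpow α⁻¹ (by rwa [← mul_one α⁻¹, Subgroup.le_translate_inv_mul_iff])
      exact ⟨-n, Subgroup.translate_eq_zpow_neg_of_translate_inv_eq (hcommfix α n)
        (by rwa [zpow_natCast])⟩
  refine ⟨hzpow, Set.Subset.antisymm ?_ (Set.range_subset_iff.mpr fun z => ⟨_, rfl⟩)⟩
  exact Set.range_subset_iff.mpr fun α => (hzpow α).imp fun _ => Eq.symm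

/-- Let H act on G by automorphisms and let E ≤ G be a subgroup
whose translates {α(E) : α ∈ H} are pairwise comparable by inclusion, with all
relevant indices finite, and such that the commutators [α, β*ⁿ] fix E. If
β* ∈ H satisfies β*(E) > E and minimizes the index [β*(E) : E] among all
β ∈ H with β(E) > E, and for every α with α(E) > E there is n ∈ ℕ with
β*ⁿ(E) ≤ α(E), then every translate α(E) equals β*^z(E) for some z ∈ ℤ;
in particular {α(E) : α ∈ H} = {β*^z(E) : z ∈ ℤ}. -/
theorem translates_of_eigenfactor_are_powers
    {H G : Type*} [Group H] [Group G]
    (φ : H →* MulAut G) (E : Subgroup G) (β' : H)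
    (hcomp : ∀ α β : H, Subgroup.translate φ E α ≤ Subgroup.translate φ E β ∨
      Subgroup.translate φ E β ≤ Subgroup.translate φ E α)
    (hfin : ∀ α β : H, Subgroup.translate φ E β ≤ Subgroup.translate φ E α →
      (Subgroup.translate φ E β).relIndex (Subgroup.translate φ E α) ≠ 0)
    (hcommfix : ∀ (α : H) (n : ℤ), Subgroup.translate φ E ⁅α, β' ^ n⁆ = E)
    (hβ' : E < Subgroup.translate φ E β')
    (hmin : ∀ β : H, E < Subgroup.translate φ E β →
      E.relIndex (Subgroup.translate φ E β') ≤ E.relIndex (Subgroup.translate φ E β))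
    (harch : ∀ α : H, E < Subgroup.translate φ E α →
      ∃ n : ℕ, Subgroup.translate φ E (β' ^ n) ≤ Subgroup.translate φ E α) :
    (∀ α : H, ∃ z : ℤ, Subgroup.translate φ E α = Subgroup.translate φ E (β' ^ z)) ∧
      Set.range (Subgroup.translate φ E) =
        Set.range (fun z : ℤ => Subgroup.translate φ E (β' ^ z)) :=
  translates_of_eigenfactor_are_powers_general φ E β' hcomp hfin hcommfix hβ' hmin
end

section
/- Let G be a tdlc group, H ≤ Aut(G) flat, ρ: H → ℤ a surjective homomorphism, and let U, V be compact open subgroups tidy for H. Then U_{H0} < U_ρ if and only if V_{H0} < V_ρ, where X_ρ := ⋂{α(X) : α ∈ H, ρ(α) ≥ 0} and X_{H0} := ⋂_{α ∈ H} α(X) for X ∈ {U, V}. -/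
open scoped Pointwise

namespace TdlcFlat

variable {G : Type*} [Group G] [TopologicalSpace G] [IsTopologicalGroup G]

/-- The image α(U) of a subgroup U under an automorphism α of G. -/
def smap (α : MulAut G) (U : Subgroup G) : Subgroup G :=
  U.map α.toMonoidHom

/-- U_{α+} = ⋂_{n ≥ 0} αⁿ(U). -/
def Uplus (α : MulAut G) (U : Subgroup G) : Subgroup G :=
  ⨅ n : ℕ, smap (α ^ n) U

/-- U_{α−} = ⋂_{n ≥ 0} α⁻ⁿ(U). -/
def Uminus (α : MulAut G) (U : Subgroup G) : Subgroup G :=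
  ⨅ n : ℕ, smap (α⁻¹ ^ n) U

/-- U is tidy for α: (TA) U = U_{α+} U_{α−} and (TB) ⋃_{n≥0} α⁻ⁿ(U_{α−}) is closed. -/
def IsTidyFor (α : MulAut G) (U : Subgroup G) : Prop :=
  (U : Set G) = (Uplus α U : Set G) * (Uminus α U : Set G) ∧
    IsClosed (⋃ n : ℕ, (smap (α⁻¹ ^ n) (Uminus α U) : Set G))

/-- U is a compact open subgroup of G. -/
def IsCompactOpen (U : Subgroup G) : Prop :=
  IsCompact (U : Set G) ∧ IsOpen (U : Set G)

/-- U is tidy for the group of automorphisms H: it is tidy for every α ∈ H.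
(H is flat precisely when some compact open subgroup is tidy for H.) -/
def IsTidyForGroup (H : Subgroup (MulAut G)) (U : Subgroup G) : Prop :=
  ∀ α ∈ H, IsTidyFor α U

/-- U_{H0} = ⋂_{α ∈ H} α(U). -/
def UH0 (H : Subgroup (MulAut G)) (U : Subgroup G) : Subgroup G :=
  ⨅ α : H, smap (α : MulAut G) U

/-- E is a U-eigenfactor of H: E ≤ U, each α ∈ H has α(E) ≤ E or α(E) ≥ E,
and E = ⋂ {α(U) : α ∈ H, α(E) ≥ E}. -/
def IsEigenfactor (H : Subgroup (MulAut G)) (U E : Subgroup G) : Prop :=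
  E ≤ U ∧ (∀ α ∈ H, smap α E ≤ E ∨ E ≤ smap α E) ∧
    E = ⨅ (α : H) (_ : E ≤ smap (α : MulAut G) E), smap (α : MulAut G) U

end TdlcFlat

namespace TdlcFlat

variable {G : Type*} [Group G] [TopologicalSpace G] [IsTopologicalGroup G]

/-- U_ρ = ⋂ {α(U) : α ∈ H, ρ(α) ≥ 0}. -/
def Urho (H : Subgroup (MulAut G)) (ρ : H → ℤ) (U : Subgroup G) : Subgroup G :=
  ⨅ (α : H) (_ : 0 ≤ ρ α), smap (α : MulAut G) U

end TdlcFlat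

/-!
Fix `a ∈ H` with `ρ a = 1`. The groups `U_ρ^{≥n} = ⋂ {α(U) : ρ(α) ≥ n}` increase with `n`, `a`
shifts them by one step, and `U_{H0}` is their intersection; hence `U_{H0} = U_ρ` exactly when
`a(U_ρ) = U_ρ`.

If `x ∈ U_ρ ∩ V` and `ρ(δ) ≥ 0`, the orbit `δ⁻ⁿ x` stays in the compact set `U`. Writing
`x = y z` with `y ∈ V_{δ⁻¹+}` and `z ∈ V_{δ⁻¹-}` (tidiness (TA)), the orbit of `y` lies in a
compact part of the closed (by (TB)) increasing union `⋃ₙ δ⁻ⁿ(V_{δ⁻¹+})`, so by Baire category in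
a single term; thus the orbit of `x` stays in `V`, and `U_ρ ∩ V ≤ V_ρ`. By symmetry the compact
groups `U_ρ` and `V_ρ` are commensurable. Now if `a(U_ρ) = U_ρ`, then `[aⁿ(V_ρ) : V_ρ]
= [a(V_ρ) : V_ρ]ⁿ` divides `[U_ρ : U_ρ ∩ V_ρ]` for every `n`, which forces `a(V_ρ) = V_ρ`.
-/

namespace TdlcFlat

theorem smap_eq_smul {G : Type*} [Group G] (α : MulAut G) (U : Subgroup G) : smap α U = α • U :=
  rfl

theorem monotone_pow_smul {G α : Type*} [Group G] [Group α] [MulDistribMulAction α G] {a : α}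
    {S : Subgroup G} (h : S ≤ a • S) : Monotone fun n : ℕ => a ^ n • S :=
  monotone_nat_of_le_succ fun n => by
    simpa only [pow_succ, mul_smul] using Subgroup.pointwise_smul_le_pointwise_smul_iff.2 h

section Commensurable

variable {G α : Type*} [Group G] [Group α] [MulDistribMulAction α G] {a : α} {P Q : Subgroup G}

theorem le_pow_smul (hQ : Q ≤ a • Q) (n : ℕ) : Q ≤ a ^ n • Q := by
  simpa using monotone_pow_smul hQ n.zero_le

theorem relIndex_pow_smul (hQ : Q ≤ a • Q) (n : ℕ) :
    Q.relIndex (a ^ n • Q) = Q.relIndex (a • Q) ^ n := by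
  induction n with
  | zero => simp
  | succ n ih =>
    have hle : a ^ n • Q ≤ a ^ (n + 1) • Q := monotone_pow_smul hQ n.le_succ
    rw [← Subgroup.relIndex_mul_relIndex _ _ _ (le_pow_smul hQ n) hle, ih, pow_succ a, mul_smul,
      Subgroup.relIndex_pointwise_smul, pow_succ]

theorem relIndex_smul_dvd (hP : a • P = P) (hQ : Q ≤ a • Q) (hQP : P.relIndex Q ≠ 0) :
    Q.relIndex (a • Q) ∣ Q.relIndex P := by
  rw [← Subgroup.inf_relIndex_right P Q] at hQP
  rw [← Subgroup.inf_relIndex_left P Q]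
  have haD : a • (P ⊓ Q) = P ⊓ a • Q := by rw [Subgroup.smul_inf, hP]
  have hD : P ⊓ Q ≤ a • (P ⊓ Q) := haD ▸ inf_le_inf_left P hQ
  have hDP : a • (P ⊓ Q) ≤ P := haD ▸ inf_le_left
  -- both sides are `[a • Q : P ⊓ Q]`, computed through `Q` and through `a • (P ⊓ Q)`
  have key : (P ⊓ Q).relIndex Q * Q.relIndex (a • Q) =
      (P ⊓ Q).relIndex Q * (P ⊓ Q).relIndex (a • (P ⊓ Q)) := by
    rw [Subgroup.relIndex_mul_relIndex _ _ _ inf_le_right hQ, mul_comm,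
      ← Subgroup.relIndex_pointwise_smul a (P ⊓ Q) Q,
      Subgroup.relIndex_mul_relIndex _ _ _ hD (Subgroup.pointwise_smul_le_pointwise_smul_iff.2
        inf_le_right)]
  rw [Nat.eq_of_mul_eq_mul_left (Nat.pos_of_ne_zero hQP) key]
  exact Dvd.intro _ (Subgroup.relIndex_mul_relIndex _ _ _ hD hDP)

theorem smul_eq_self_of_commensurable (hP : a • P = P) (hQ : Q ≤ a • Q)
    (hPQ : Q.relIndex P ≠ 0) (hQP : P.relIndex Q ≠ 0) : a • Q = Q := by
  have hdvd (n : ℕ) : Q.relIndex (a • Q) ^ n ∣ Q.relIndex P := by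
    rw [← relIndex_pow_smul hQ]
    exact relIndex_smul_dvd (smul_eq_self_of_mem_zpowers (Subgroup.npow_mem_zpowers a n) hP)
      (le_pow_smul hQ n) hQP
  have hone : Q.relIndex (a • Q) = 1 := by
    by_contra hne
    obtain ⟨n, hn⟩ := Nat.finiteMultiplicity_iff.2 ⟨hne, Nat.pos_of_ne_zero hPQ⟩
    exact hn (hdvd (n + 1))
  exact le_antisymm (Subgroup.relIndex_eq_one.1 hone) hQ

end Commensurable

section Topology

variable {G : Type*} [Group G] [TopologicalSpace G]

variable (G) in
def homeoAut : Subgroup (MulAut G) where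
  carrier := {α | Continuous ⇑α ∧ Continuous ⇑α⁻¹}
  mul_mem' {α β} hα hβ := by
    refine ⟨hα.1.comp hβ.1, ?_⟩
    rw [mul_inv_rev]
    exact hβ.2.comp hα.2
  one_mem' := ⟨continuous_id, continuous_id⟩
  inv_mem' {α} hα := by
    rw [Set.mem_ofPred_eq, inv_inv]
    exact hα.symm

variable {α : MulAut G} {S : Subgroup G}

theorem isOpen_smul (hα : α ∈ homeoAut G) (hS : IsOpen (S : Set G)) :
    IsOpen ((α • S : Subgroup G) : Set G) := by
  rw [Subgroup.coe_pointwise_smul, ← Set.preimage_smul_inv]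
  exact hS.preimage hα.2

theorem isClosed_smul (hα : α ∈ homeoAut G) (hS : IsClosed (S : Set G)) :
    IsClosed ((α • S : Subgroup G) : Set G) := by
  rw [Subgroup.coe_pointwise_smul, ← Set.preimage_smul_inv]
  exact hS.preimage hα.2

variable [IsTopologicalGroup G]

theorem relIndex_ne_zero_of_isCompact {K O : Subgroup G} (hK : IsCompact (K : Set G))
    (hO : IsOpen (O : Set G)) : O.relIndex K ≠ 0 := by
  have : CompactSpace K := isCompact_iff_compactSpace.1 hK
  have := Subgroup.quotient_finite_of_isOpen (O.subgroupOf K) (hO.preimage continuous_subtype_val)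
  exact Subgroup.index_ne_zero_of_finite

theorem exists_subset_of_isCompact_subset_iUnion [LocallyCompactSpace G] {S : ℕ → Subgroup G}
    (hS : Monotone S) (hSc : ∀ n, IsClosed (S n : Set G))
    (hU : IsClosed (⋃ n, (S n : Set G))) {C : Set G} (hC : IsCompact C)
    (hCS : C ⊆ ⋃ n, (S n : Set G)) : ∃ n, C ⊆ S n := by
  set A := ⨆ n, S n
  have hA : (A : Set G) = ⋃ n, (S n : Set G) := Subgroup.coe_iSup_of_directed hS.directed_le
  have hAc : Topology.IsClosedEmbedding ((↑) : A → G) :=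
    (hA ▸ hU).isClosedEmbedding_subtypeVal
  have hcover : ∀ z : A, ∃ n, z ∈ ((S n).subgroupOf A : Set A) := fun z => by
    obtain ⟨n, hn⟩ := Set.mem_iUnion.1 (show (z : G) ∈ ⋃ n, (S n : Set G) from hA ▸ z.2)
    exact ⟨n, hn⟩
  have : LocallyCompactSpace A := hAc.locallyCompactSpace
  obtain ⟨m, y, hy⟩ := nonempty_interior_of_iUnion_of_closed
    (f := fun n => ((S n).subgroupOf A : Set A)) (fun n => (hSc n).preimage continuous_subtype_val)
    (Set.eq_univ_of_forall fun z => Set.mem_iUnion.2 (hcover z))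
  -- a subgroup of `A` with an interior point is open
  have hopen : ∀ n, IsOpen ((S (m + n)).subgroupOf A : Set A) := fun n =>
    Subgroup.isOpen_mono (Subgroup.subgroupOf_mono A (hS (Nat.le_add_right m n)))
      (Subgroup.isOpen_of_mem_nhds _ (mem_interior_iff_mem_nhds.1 hy))
  obtain ⟨n, hn⟩ := (hAc.isCompact_preimage hC).elim_directed_cover _ hopen
    (fun z _ => by
      obtain ⟨k, hk⟩ := hcover z
      exact Set.mem_iUnion.2 ⟨k, Subgroup.subgroupOf_mono A (hS (Nat.le_add_left k m)) hk⟩)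
    ((Monotone.directed_le fun i j hij => Subgroup.subgroupOf_mono A (hS (by omega))))
  have hCA : C ⊆ A := hA ▸ hCS
  exact ⟨m + n, fun c hc => hn (show (⟨c, hCA hc⟩ : A) ∈ Subtype.val ⁻¹' C from hc)⟩

end Topology

section Tidy

variable {G : Type*} [Group G] {g : MulAut G} {V : Subgroup G}

theorem Uminus_inv : Uminus g⁻¹ V = Uplus g V := by
  simp only [Uminus, Uplus, inv_inv]

theorem Uplus_le_self : Uplus g V ≤ V := fun _ hx => by
  simpa only [smap_eq_smul, pow_zero, one_smul] using Subgroup.mem_iInf.1 hx 0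

theorem Uplus_le_smul_Uplus : Uplus g V ≤ g • Uplus g V := by
  intro x hx
  rw [Subgroup.mem_pointwise_smul_iff_inv_smul_mem, Uplus, Subgroup.mem_iInf]
  intro n
  rw [smap_eq_smul, ← Subgroup.smul_mem_pointwise_smul_iff (a := g), smul_inv_smul, ← mul_smul,
    ← pow_succ']
  exact Subgroup.mem_iInf.1 hx (n + 1)

theorem pow_apply_mem_of_mem_Uminus {b : G} (hb : b ∈ Uminus g V) (n : ℕ) : (g ^ n) b ∈ V := by
  have := Subgroup.mem_iInf.1 hb n
  rwa [smap_eq_smul, Subgroup.mem_pointwise_smul_iff_inv_smul_mem, inv_pow, inv_inv] at this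

variable [TopologicalSpace G] [IsTopologicalGroup G]

theorem isClosed_Uplus (hg : g ∈ homeoAut G) (hV : IsOpen (V : Set G)) :
    IsClosed (Uplus g V : Set G) := by
  rw [Uplus, Subgroup.coe_iInf]
  exact isClosed_iInter fun n =>
    Subgroup.isClosed_of_isOpen _ (isOpen_smul (pow_mem hg n) hV)

variable [LocallyCompactSpace G]

theorem IsTidyFor.pow_apply_mem (hTA : IsTidyFor g V) (hTB : IsTidyFor g⁻¹ V)
    (hg : g ∈ homeoAut G) (hV : IsCompactOpen V) {x : G} (hx : x ∈ V) {K : Set G}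
    (hK : IsCompact K) (horb : ∀ n : ℕ, (g ^ n) x ∈ K) (n : ℕ) : (g ^ n) x ∈ V := by
  obtain ⟨a, ha, b, hb, rfl⟩ : x ∈ (Uplus g V : Set G) * (Uminus g V : Set G) := hTA.1 ▸ hx
  set S : ℕ → Subgroup G := fun n => g ^ n • Uplus g V
  have hclosed : IsClosed (⋃ n, (S n : Set G)) := by
    simpa only [inv_inv, Uminus_inv, smap_eq_smul] using hTB.2
  have hS : ∀ n, (g ^ n) a ∈ S n := fun n => Subgroup.smul_mem_pointwise_smul _ _ _ ha
  have hK' : ∀ n, (g ^ n) a ∈ K * (V : Set G) := fun n => by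
    have e : (g ^ n) a = (g ^ n) (a * b) * ((g ^ n) b)⁻¹ := by rw [map_mul, mul_inv_cancel_right]
    exact e ▸ Set.mul_mem_mul (horb n) (V.inv_mem (pow_apply_mem_of_mem_Uminus hb n))
  -- The orbit of `a` stays in a compact part of the closed increasing union of the `gⁿ • V₊`,
  -- hence in a single one of them.
  obtain ⟨M, hM⟩ := exists_subset_of_isCompact_subset_iUnion
    (monotone_pow_smul Uplus_le_smul_Uplus)
    (fun n => isClosed_smul (pow_mem hg n) (isClosed_Uplus hg hV.2)) hclosed
    ((hK.mul hV.1).inter_left hclosed) Set.inter_subset_left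
  have haV : (g ^ n) a ∈ Uplus g V := by
    have := hM ⟨Set.mem_iUnion.2 ⟨M + n, hS (M + n)⟩, hK' (M + n)⟩
    rwa [pow_add, MulAut.mul_apply, SetLike.mem_coe, ← MulAut.smul_def,
      Subgroup.smul_mem_pointwise_smul_iff] at this
  rw [map_mul]
  exact V.mul_mem (Uplus_le_self haV) (pow_apply_mem_of_mem_Uminus hb n)

end Tidy

section Filtration

variable {G : Type*} [Group G] {H : Subgroup (MulAut G)} {ρ : H → ℤ} {U : Subgroup G}

variable (H ρ U) in
def UrhoGe (n : ℤ) : Subgroup G :=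
  ⨅ (α : H) (_ : n ≤ ρ α), (α : MulAut G) • U

theorem Urho_eq_UrhoGe_zero : Urho H ρ U = UrhoGe H ρ U 0 := rfl

theorem mem_UrhoGe {n : ℤ} {x : G} :
    x ∈ UrhoGe H ρ U n ↔ ∀ α : H, n ≤ ρ α → x ∈ (α : MulAut G) • U := by
  simp only [UrhoGe, Subgroup.mem_iInf]

theorem monotone_UrhoGe : Monotone (UrhoGe H ρ U) := fun _ _ hmn _ hx =>
  mem_UrhoGe.2 fun α hα => mem_UrhoGe.1 hx α (hmn.trans hα)

theorem UH0_eq_iInf_UrhoGe : UH0 H U = ⨅ n, UrhoGe H ρ U n := by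
  ext x
  simp only [UH0, smap_eq_smul, Subgroup.mem_iInf, mem_UrhoGe]
  exact ⟨fun h _ α _ => h α, fun h α => h (ρ α) α le_rfl⟩

theorem UH0_le_Urho : UH0 H U ≤ Urho H ρ U := by
  rw [UH0_eq_iInf_UrhoGe]
  exact iInf_le _ 0

section Hom

variable (hhom : ∀ a b : H, ρ (a * b) = ρ a + ρ b)
include hhom

theorem rho_one : ρ 1 = 0 := by
  have := hhom 1 1
  rw [mul_one] at this
  omega

theorem rho_inv (α : H) : ρ α⁻¹ = -ρ α := by
  have := hhom α⁻¹ α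
  rw [inv_mul_cancel, rho_one hhom] at this
  omega

theorem rho_pow (α : H) (n : ℕ) : ρ (α ^ n) = n * ρ α := by
  induction n with
  | zero => simp [rho_one hhom]
  | succ k ih => rw [pow_succ, hhom, ih]; push_cast; ring

theorem smul_UrhoGe (β : H) (n : ℤ) :
    (β : MulAut G) • UrhoGe H ρ U n = UrhoGe H ρ U (n + ρ β) := by
  ext x
  simp only [Subgroup.mem_pointwise_smul_iff_inv_smul_mem, mem_UrhoGe]
  refine (Equiv.mulLeft β).forall_congr fun α => ?_
  rw [Equiv.coe_mulLeft, hhom, Subgroup.coe_mul, mul_inv_rev, mul_smul]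
  exact imp_congr_left (by omega)

theorem Urho_le_self : Urho H ρ U ≤ U := fun _ hx => by
  simpa using mem_UrhoGe.1 hx 1 (rho_one hhom).ge

theorem UH0_eq_Urho_iff {a : H} (ha : ρ a = 1) :
    UH0 H U = Urho H ρ U ↔ (a : MulAut G) • Urho H ρ U = Urho H ρ U := by
  have hsucc (n : ℤ) : (a : MulAut G) • UrhoGe H ρ U n = UrhoGe H ρ U (n + 1) := by
    rw [smul_UrhoGe hhom, ha]
  have hpred (n : ℤ) : (a : MulAut G)⁻¹ • UrhoGe H ρ U n = UrhoGe H ρ U (n - 1) := by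
    rw [← Subgroup.coe_inv, smul_UrhoGe hhom, rho_inv hhom, ha, ← sub_eq_add_neg]
  rw [UH0_eq_iInf_UrhoGe, Urho_eq_UrhoGe_zero]
  constructor
  · intro h
    have hm1 : UrhoGe H ρ U (-1) = UrhoGe H ρ U 0 :=
      le_antisymm (monotone_UrhoGe (by norm_num)) (h ▸ iInf_le _ (-1))
    rw [← hm1, hsucc, hm1]
    norm_num
  · intro h
    have hconst (n : ℤ) : UrhoGe H ρ U n = UrhoGe H ρ U 0 := by
      induction n using Int.induction_on with
      | zero => rfl
      | succ k ih => rw [← hsucc, ih, h]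
      | pred k ih => rw [← hpred, ih, inv_smul_eq_iff, h]
    exact le_antisymm (iInf_le _ 0) (le_iInf fun n => (hconst n).ge)

end Hom

end Filtration

section Urho

variable {G : Type*} [Group G] [TopologicalSpace G] [IsTopologicalGroup G]
  {H : Subgroup (MulAut G)} {ρ : H → ℤ} (hhom : ∀ a b : H, ρ (a * b) = ρ a + ρ b)
include hhom

theorem isCompact_Urho (hH : H ≤ homeoAut G) {U : Subgroup G} (hU : IsCompactOpen U) :
    IsCompact (Urho H ρ U : Set G) := by
  refine hU.1.of_isClosed_subset ?_ (Urho_le_self hhom)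
  simp only [Urho, smap_eq_smul, Subgroup.coe_iInf]
  exact isClosed_iInter fun α => isClosed_iInter fun _ =>
    Subgroup.isClosed_of_isOpen _ (isOpen_smul (hH α.2) hU.2)

theorem Urho_inf_le_Urho [LocallyCompactSpace G] (hH : H ≤ homeoAut G) {U V : Subgroup G}
    (hU : IsCompact (U : Set G)) (hV : IsCompactOpen V) (htidyV : IsTidyForGroup H V) :
    Urho H ρ U ⊓ V ≤ Urho H ρ V := by
  rintro x ⟨hxU, hxV⟩
  refine mem_UrhoGe.2 fun δ hδ => ?_
  have hδinv : (δ : MulAut G)⁻¹ ∈ H := H.inv_mem δ.2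
  have horb (n : ℕ) : ((δ : MulAut G)⁻¹ ^ n) x ∈ (U : Set G) := by
    have := mem_UrhoGe.1 hxU (δ ^ n) (by rw [rho_pow hhom]; positivity)
    rwa [Subgroup.mem_pointwise_smul_iff_inv_smul_mem, Subgroup.coe_pow, ← inv_pow] at this
  have := (htidyV _ hδinv).pow_apply_mem (by simpa using htidyV _ δ.2) (hH hδinv) hV hxV hU horb 1
  rwa [pow_one, ← MulAut.smul_def, ← Subgroup.mem_pointwise_smul_iff_inv_smul_mem] at this

end Urho

theorem smul_Urho_eq_self_of_smul_Urho_eq_self {G : Type*} [Group G] [TopologicalSpace G]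
    [IsTopologicalGroup G] [LocallyCompactSpace G] {H : Subgroup (MulAut G)}
    (hH : H ≤ homeoAut G) {ρ : H → ℤ} (hhom : ∀ a b : H, ρ (a * b) = ρ a + ρ b) {a : H}
    (ha : 0 ≤ ρ a) {U V : Subgroup G} (hU : IsCompactOpen U) (htidyU : IsTidyForGroup H U)
    (hV : IsCompactOpen V) (htidyV : IsTidyForGroup H V)
    (hinv : (a : MulAut G) • Urho H ρ U = Urho H ρ U) :
    (a : MulAut G) • Urho H ρ V = Urho H ρ V := by
  have hUV : Urho H ρ U ⊓ V ≤ Urho H ρ V := Urho_inf_le_Urho hhom hH hU.1 hV htidyV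
  have hVU : Urho H ρ V ⊓ U ≤ Urho H ρ U := Urho_inf_le_Urho hhom hH hV.1 hU htidyU
  refine smul_eq_self_of_commensurable hinv ?_ ?_ ?_
  · rw [Urho_eq_UrhoGe_zero, smul_UrhoGe hhom]
    exact monotone_UrhoGe (by omega)
  · refine mt (Subgroup.relIndex_eq_zero_of_le_left hUV) ?_
    rw [Subgroup.inf_relIndex_left]
    exact relIndex_ne_zero_of_isCompact (isCompact_Urho hhom hH hU) hV.2
  · refine mt (Subgroup.relIndex_eq_zero_of_le_left hVU) ?_
    rw [Subgroup.inf_relIndex_left]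
    exact relIndex_ne_zero_of_isCompact (isCompact_Urho hhom hH hV) hU.2

end TdlcFlat

open TdlcFlat in
theorem UH0_lt_Urho_iff_general
    {G : Type*} [Group G] [TopologicalSpace G] [IsTopologicalGroup G]
    [LocallyCompactSpace G]
    (H : Subgroup (MulAut G))
    (hcont : ∀ α ∈ H, Continuous ⇑α)
    (ρ : H → ℤ) (hhom : ∀ a b : H, ρ (a * b) = ρ a + ρ b)
    (hsurj : Function.Surjective ρ)
    (U V : Subgroup G)
    (hU : IsCompactOpen U) (htidyU : IsTidyForGroup H U)
    (hV : IsCompactOpen V) (htidyV : IsTidyForGroup H V) :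
    UH0 H U < Urho H ρ U ↔ UH0 H V < Urho H ρ V := by
  have hH : H ≤ homeoAut G := fun α hα => ⟨hcont α hα, hcont _ (H.inv_mem hα)⟩
  obtain ⟨a, ha⟩ := hsurj 1
  simp only [lt_iff_le_and_ne, UH0_le_Urho, true_and, ne_eq, UH0_eq_Urho_iff hhom ha]
  have ha0 : 0 ≤ ρ a := by omega
  exact not_congr ⟨smul_Urho_eq_self_of_smul_Urho_eq_self hH hhom ha0 hU htidyU hV htidyV,
    smul_Urho_eq_self_of_smul_Urho_eq_self hH hhom ha0 hV htidyV hU htidyU⟩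

open TdlcFlat in
/-- Let G be a tdlc group, H ≤ Aut(G) flat, ρ : H → ℤ a
surjective homomorphism, and U, V compact open subgroups tidy for H. Then
U_{H0} < U_ρ if and only if V_{H0} < V_ρ. -/
theorem UH0_lt_Urho_iff
    {G : Type*} [Group G] [TopologicalSpace G] [IsTopologicalGroup G]
    [LocallyCompactSpace G] [TotallyDisconnectedSpace G]
    (H : Subgroup (MulAut G))
    (hcont : ∀ α ∈ H, Continuous ⇑α)
    (ρ : H → ℤ) (hhom : ∀ a b : H, ρ (a * b) = ρ a + ρ b)
    (hsurj : Function.Surjective ρ)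
    (U V : Subgroup G)
    (hU : IsCompactOpen U) (htidyU : IsTidyForGroup H U)
    (hV : IsCompactOpen V) (htidyV : IsTidyForGroup H V) :
    UH0 H U < Urho H ρ U ↔ UH0 H V < Urho H ρ V :=
  UH0_lt_Urho_iff_general H hcont ρ hhom hsurj U V hU htidyU hV htidyV
end
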